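/- arXiv:2002.08004 — 7 statements merged into one kernel-verified Lean document; each statement's English description precedes it below -/
import Mathlib

section
/- Let 1 ≤ j ≤ m and 1 ≤ i ≤ n−j+1. Suppose P[1:j−1] = T[i:i+j−2] and P[j] ≠ T[i+j−1]. Then, setting k_j = KMP_Shift[j], it holds that P[1 : j−k_j−1] = T[i+k_j : i+j−2]. (Fact 1, first part.) -/
/-- The set whose greatest element is `Strong_Bord_P(j)` for `1 ≤ j ≤ m`:
`{ k | P[1:k] = P[j−k:j−1], P[k+1] ≠ P[j], 0 ≤ k < j } ∪ {−1}`.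
Strings are 1-indexed functions `ℤ → ℕ`; `P[a:b]` equality is stated pointwise. -/
def SBSet (P : ℤ → ℕ) (j : ℤ) : Set ℤ :=
  {k | k = -1 ∨ (0 ≤ k ∧ k < j ∧
    (∀ t : ℤ, 1 ≤ t → t ≤ k → P t = P (j - k + t - 1)) ∧
    P (k + 1) ≠ P j)}

/-- Fact 1, first part: if `P[1:j−1] = T[i:i+j−2]` and `P[j] ≠ T[i+j−1]`, then with
`k_j = KMP_Shift[j] = j − Strong_Bord_P(j) − 1` we have `P[1:j−k_j−1] = T[i+k_j:i+j−2]`. -/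
theorem fact1_first
    (n m : ℤ) (T P : ℤ → ℕ) (hm : 1 ≤ m) (hmn : m ≤ n)
    (j i : ℤ) (hj1 : 1 ≤ j) (hjm : j ≤ m)
    (hi1 : 1 ≤ i) (hin : i ≤ n - j + 1)
    (hpre : ∀ t : ℤ, 1 ≤ t → t ≤ j - 1 → P t = T (i + t - 1))
    (hmis : P j ≠ T (i + j - 1))
    (sb : ℤ) (hsb : IsGreatest (SBSet P j) sb) :
    ∀ t : ℤ, 1 ≤ t → t ≤ j - (j - sb - 1) - 1 →
      P t = T (i + (j - sb - 1) + t - 1) := by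
  intro t ht1 ht2
  have ht2' : t ≤ sb := by linarith
  rcases hsb.1 with h | ⟨hk0, hkj, hbord, hne⟩
  · omega
  · have hs1 : 1 ≤ j - sb + t - 1 := by omega
    have hs2 : j - sb + t - 1 ≤ j - 1 := by omega
    have := hpre (j - sb + t - 1) hs1 hs2
    rw [hbord t ht1 ht2', this]
    ring_nf
end

section
/- Let 1 ≤ j ≤ m and 1 ≤ i ≤ n−j+1. Suppose P[1:j−1] = T[i:i+j−2] and P[j] ≠ T[i+j−1]. Then for every integer k with 0 < k < KMP_Shift[j] and i+k+m−1 ≤ n, it holds that P ≠ T[i+k : i+k+m−1]; that is, the KMP shift skips no occurrence of P in T. (Fact 1, second part.) -/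
/-- Fact 1, second part: if `P[1:j−1] = T[i:i+j−2]` and `P[j] ≠ T[i+j−1]`, then for every
`0 < k < KMP_Shift[j] = j − Strong_Bord_P(j) − 1` with `i+k+m−1 ≤ n`,
`P ≠ T[i+k : i+k+m−1]`. -/
theorem fact1_second
    (n m : ℤ) (T P : ℤ → ℕ) (hm : 1 ≤ m) (hmn : m ≤ n)
    (j i : ℤ) (hj1 : 1 ≤ j) (hjm : j ≤ m)
    (hi1 : 1 ≤ i) (hin : i ≤ n - j + 1)
    (hpre : ∀ t : ℤ, 1 ≤ t → t ≤ j - 1 → P t = T (i + t - 1))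
    (hmis : P j ≠ T (i + j - 1))
    (sb : ℤ) (hsb : IsGreatest (SBSet P j) sb) :
    ∀ k : ℤ, 0 < k → k < j - sb - 1 → i + k + m - 1 ≤ n →
      ¬ (∀ t : ℤ, 1 ≤ t → t ≤ m → P t = T (i + k + t - 1)) := by
  intro k hk0 hks hkn hocc
  have hsbge : -1 ≤ sb := by
    rcases hsb.1 with h | ⟨h, _⟩ <;> omega
  set b := j - 1 - k with hb
  have hb_mem : b ∈ SBSet P j := by
    right
    refine ⟨by omega, by omega, ?_, ?_⟩
    · intro t ht1 htb
      have h1 : P t = T (i + k + t - 1) := hocc t ht1 (by omega)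
      have h2 : P (k + t) = T (i + (k + t) - 1) := hpre (k + t) (by omega) (by omega)
      have h3 : j - b + t - 1 = k + t := by omega
      have h4 : i + (k + t) - 1 = i + k + t - 1 := by ring
      rw [h3, h2, h4, h1]
    · have h1 : P (b + 1) = T (i + k + (b + 1) - 1) := hocc (b + 1) (by omega) (by omega)
      have h2 : i + k + (b + 1) - 1 = i + j - 1 := by omega
      rw [h1, h2]
      exact fun h => hmis h.symm
  have := hsb.2 hb_mem
  omega
end

section
/- Let q ≤ m and 1 ≤ i ≤ n−m+1, and suppose shift(h(T[i+m−q:i+m−1])) = j. Then for every integer k with 0 < k < j and i+k+m−1 ≤ n, it holds that P ≠ T[i+k : i+k+m−1]; that is, the HASHq shift skips no occurrence of P in T. (Fact 2, second part.) -/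
/-- Hash of the `q`-gram of `w` starting at position `a` (i.e. `w[a : a+q−1]`):
`h(x) = (2^{q−1}·x[1] + ⋯ + 2·x[q−1] + x[q]) mod 2^8`.
Strings are 1-indexed functions `ℤ → ℕ`. -/
def h2 (w : ℤ → ℕ) (q : ℕ) (a : ℤ) : ℕ :=
  (∑ t ∈ Finset.range q, 2 ^ (q - 1 - t) * w (a + (t : ℤ))) % 2 ^ 8

/-- The set whose greatest element is `max({ j | h(P[j−q+1:j]) = c, q ≤ j ≤ m } ∪ {q−1})`,
so that `shift(c) = m` minus this greatest element. -/
def ShiftSet (P : ℤ → ℕ) (q : ℕ) (m : ℤ) (c : ℕ) : Set ℤ :=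
  {j | j = (q : ℤ) - 1 ∨ ((q : ℤ) ≤ j ∧ j ≤ m ∧ h2 P q (j - q + 1) = c)}

/-- Fact 2, second part: if `shift(h(T[i+m−q:i+m−1])) = j`, then for every `0 < k < j`
with `i+k+m−1 ≤ n`, `P ≠ T[i+k : i+k+m−1]`. -/
theorem fact2_second
    (n m : ℤ) (T P : ℤ → ℕ) (q : ℕ) (hq1 : 1 ≤ q) (hqm : (q : ℤ) ≤ m) (hmn : m ≤ n)
    (i : ℤ) (hi1 : 1 ≤ i) (hin : i ≤ n - m + 1)
    (mx j : ℤ)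
    (hmx : IsGreatest (ShiftSet P q m (h2 T q (i + m - q))) mx)
    (hj : j = m - mx) :
    ∀ k : ℤ, 0 < k → k < j → i + k + m - 1 ≤ n →
      ¬ (∀ t : ℤ, 1 ≤ t → t ≤ m → P t = T (i + k + t - 1)) := by
  intro k hk0 hkj hkn hocc
  have hmxq : (q : ℤ) - 1 ≤ mx := hmx.2 (Or.inl rfl)
  have hkm : k ≤ m - q := by omega
  have hmem : (m - k) ∈ ShiftSet P q m (h2 T q (i + m - q)) := by
    refine Or.inr ⟨by omega, by omega, ?_⟩
    unfold h2
    congr 1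
    refine Finset.sum_congr rfl fun t ht => ?_
    have htq : (t : ℤ) < q := by exact_mod_cast Finset.mem_range.mp ht
    have := hocc (m - k - q + 1 + t) (by omega) (by omega)
    rw [show m - k - (q : ℤ) + 1 + (t : ℤ) = m - k - q + 1 + t by ring] at this
    rw [this]
    congr 2
    omega
  have := hmx.2 hmem
  omega
end

section
/- Let q ≤ m and 1 ≤ i ≤ n−m+1, and suppose HQ_Shift[h(T[i+m−q:i+m−1])] = j. Then: (1) if j ≠ m−q+1, then h(P[m−j−q+1 : m−j]) = h(T[i+m−q : i+m−1]); and (2) for every integer k with 0 < k < j and i+k+m−1 ≤ n, P ≠ T[i+k : i+k+m−1]. (Fact 2 holds for HQ_Shift.) -/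
/-- Hash of the `q`-gram of `w` starting at position `a` (i.e. `w[a : a+q−1]`):
`h(x) = (4^{q−1}·x[1] + ⋯ + 4·x[q−1] + x[q]) mod 2^16`.
Strings are 1-indexed functions `ℤ → ℕ`. -/
def h4 (w : ℤ → ℕ) (q : ℕ) (a : ℤ) : ℕ :=
  (∑ t ∈ Finset.range q, 4 ^ (q - 1 - t) * w (a + (t : ℤ))) % 2 ^ 16

/-- The set whose greatest element is `max({ j | h(P[j−q+1:j]) = c, q ≤ j ≤ m } ∪ {q−1})`,
so that `HQ_Shift[c] = m` minus this greatest element. -/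
def HQSet (P : ℤ → ℕ) (q : ℕ) (m : ℤ) (c : ℕ) : Set ℤ :=
  {j | j = (q : ℤ) - 1 ∨ ((q : ℤ) ≤ j ∧ j ≤ m ∧ h4 P q (j - q + 1) = c)}

/-- Fact 2 holds for `HQ_Shift`: if `HQ_Shift[h(T[i+m−q:i+m−1])] = j`, then
(1) if `j ≠ m−q+1` then `h(P[m−j−q+1 : m−j]) = h(T[i+m−q : i+m−1])`, and
(2) for every `0 < k < j` with `i+k+m−1 ≤ n`, `P ≠ T[i+k : i+k+m−1]`. -/
theorem fact2_for_hq_shift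
    (n m : ℤ) (T P : ℤ → ℕ) (q : ℕ) (hq1 : 1 ≤ q) (hqm : (q : ℤ) ≤ m) (hmn : m ≤ n)
    (i : ℤ) (hi1 : 1 ≤ i) (hin : i ≤ n - m + 1)
    (mx j : ℤ)
    (hmx : IsGreatest (HQSet P q m (h4 T q (i + m - q))) mx)
    (hj : j = m - mx) :
    (j ≠ m - q + 1 → h4 P q (m - j - q + 1) = h4 T q (i + m - q)) ∧
    (∀ k : ℤ, 0 < k → k < j → i + k + m - 1 ≤ n →
      ¬ (∀ t : ℤ, 1 ≤ t → t ≤ m → P t = T (i + k + t - 1))) := by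
  obtain ⟨hmem, hub⟩ := hmx
  constructor
  · intro hne
    rcases hmem with hmem | ⟨_, _, hh⟩
    · exfalso; apply hne; omega
    · have : m - j = mx := by omega
      rw [this]
      exact hh
  · intro k hk0 hkj hkn hmatch
    -- m - k is in the set, so m - k ≤ mx = m - j, contradicting k < j
    have hqle : (q : ℤ) - 1 ≤ mx := hub (Or.inl rfl)
    have hmem2 : m - k ∈ HQSet P q m (h4 T q (i + m - q)) := by
      right
      refine ⟨by omega, by omega, ?_⟩
      unfold h4
      congr 1
      apply Finset.sum_congr rfl
      intro t ht
      simp only [Finset.mem_range] at ht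
      congr 1
      have h1 : (1 : ℤ) ≤ m - k - (q:ℤ) + 1 + (t:ℤ) := by
        have : (t:ℤ) ≥ 0 := Int.natCast_nonneg t
        omega
      have h2 : m - k - (q:ℤ) + 1 + (t:ℤ) ≤ m := by
        have : (t:ℤ) ≤ (q:ℤ) - 1 := by
          have := ht
          omega
        omega
      have := hmatch (m - k - (q:ℤ) + 1 + (t:ℤ)) h1 h2
      rw [this]
      congr 1
      omega
    have := hub hmem2
    omega
end

section
/- Let q ≤ j ≤ m and 1 ≤ i ≤ n−m+1, and suppose h(P[j−q+1:j]) = h(T[i+j−q : i+j−1]). Then for every integer k with 0 < k < dist[j] and i+k+m−1 ≤ n, it holds that P ≠ T[i+k : i+k+m−1]; that is, shifting the pattern by dist[j] skips no occurrence of P in T. (Fact 3, second part.) -/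
/-- The set whose least element is `dist[j]`, where `j' = j−q+1`:
`{ k | h(P[j'−k : j−k]) = h(P[j':j]), 1 ≤ k ≤ j−q } ∪ {j'}`. -/
def DistSet (P : ℤ → ℕ) (q : ℕ) (j : ℤ) : Set ℤ :=
  {k | k = j - q + 1 ∨
    (1 ≤ k ∧ k ≤ j - q ∧ h4 P q (j - q + 1 - k) = h4 P q (j - q + 1))}

/-- Fact 3, second part: if `h(P[j−q+1:j]) = h(T[i+j−q:i+j−1])`, then for every
`0 < k < dist[j]` with `i+k+m−1 ≤ n`, `P ≠ T[i+k : i+k+m−1]`. -/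
theorem fact3_second
    (n m : ℤ) (T P : ℤ → ℕ) (q : ℕ) (hq1 : 1 ≤ q) (hmn : m ≤ n)
    (j i : ℤ) (hqj : (q : ℤ) ≤ j) (hjm : j ≤ m)
    (hi1 : 1 ≤ i) (hin : i ≤ n - m + 1)
    (hhash : h4 P q (j - q + 1) = h4 T q (i + j - q))
    (d : ℤ) (hd : IsLeast (DistSet P q j) d) :
    ∀ k : ℤ, 0 < k → k < d → i + k + m - 1 ≤ n →
      ¬ (∀ t : ℤ, 1 ≤ t → t ≤ m → P t = T (i + k + t - 1)) := by
  intro k hk0 hkd _ hmatch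
  have hj' : d ≤ j - q + 1 := hd.2 (Or.inl rfl)
  have hk_le : k ≤ j - q := by omega
  have heq : h4 P q (j - q + 1 - k) = h4 T q (i + j - q) := by
    unfold h4
    congr 1
    apply Finset.sum_congr rfl
    intro s hs
    simp only [Finset.mem_range] at hs
    congr 1
    have ht := hmatch (j - q + 1 - k + s) (by push_cast; omega) (by push_cast; omega)
    rw [ht]
    congr 1
    ring
  have hmem : k ∈ DistSet P q j := Or.inr ⟨hk0, hk_le, heq.trans hhash.symm⟩
  have := hd.2 hmem
  omega
end

section
/- For every j with 2 ≤ j ≤ m, letting b = Bord_P(j−1): if P[b+1] ≠ P[j] then Strong_Bord_P(j) = b, and if P[b+1] = P[j] then Strong_Bord_P(j) = Strong_Bord_P(b+1). (This recurrence underlies the linear-time preprocessing algorithm computing KMP_Shift.) -/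
/-- The set whose greatest element is `Bord_P(i)`, the length of the longest proper
border of `P[1:i]`: `{ j | P[1:j] = P[i−j+1:i], 0 ≤ j < i }`.
Strings are 1-indexed functions `ℤ → ℕ`; substring equality is stated pointwise. -/
def BordSet (P : ℤ → ℕ) (i : ℤ) : Set ℤ :=
  {j | 0 ≤ j ∧ j < i ∧ ∀ t : ℤ, 1 ≤ t → t ≤ j → P t = P (i - j + t)}

/-- For `2 ≤ j ≤ m` and `b = Bord_P(j−1)`: if `P[b+1] ≠ P[j]` then `Strong_Bord_P(j) = b`,
and if `P[b+1] = P[j]` then `Strong_Bord_P(j) = Strong_Bord_P(b+1)`. -/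
theorem strong_border_recurrence
    (m : ℤ) (P : ℤ → ℕ) (hm : 1 ≤ m)
    (j : ℤ) (hj2 : 2 ≤ j) (hjm : j ≤ m)
    (b : ℤ) (hb : IsGreatest (BordSet P (j - 1)) b)
    (sbj : ℤ) (hsbj : IsGreatest (SBSet P j) sbj)
    (sbb : ℤ) (hsbb : IsGreatest (SBSet P (b + 1)) sbb) :
    (P (b + 1) ≠ P j → sbj = b) ∧ (P (b + 1) = P j → sbj = sbb) := by
  obtain ⟨⟨hb0, hbj, hbB⟩, hbub⟩ := hb
  obtain ⟨hsbjmem, hsbjub⟩ := hsbj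
  obtain ⟨hsbbmem, hsbbub⟩ := hsbb
  constructor
  · intro hne
    have hbmem : b ∈ SBSet P j := Or.inr ⟨hb0, by linarith,
      fun t ht1 htb => by
        rw [show j - b + t - 1 = j - 1 - b + t by ring]; exact hbB t ht1 htb, hne⟩
    have hge : b ≤ sbj := hsbjub hbmem
    rcases hsbjmem with h | ⟨h0, hlt, hB, hne'⟩
    · linarith
    · have hne'' : sbj ≠ j - 1 := by
        intro h
        exact hne' (by rw [h, show j - 1 + 1 = j by ring])
      have hlt' : sbj < j - 1 := lt_of_le_of_ne (by linarith) hne''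
      have : sbj ∈ BordSet P (j - 1) := ⟨h0, hlt', fun t ht1 ht2 => by
        rw [show j - 1 - sbj + t = j - sbj + t - 1 by ring]; exact hB t ht1 ht2⟩
      have := hbub this
      linarith
  · intro heq
    -- sbb ∈ SBSet P j
    have hsbbmemj : sbb ∈ SBSet P j := by
      rcases hsbbmem with h | ⟨h0, hlt, hB, hne⟩
      · exact Or.inl h
      · have hne' : sbb ≠ b := by
          intro h; exact hne (by rw [h])
        have hltb : sbb < b := lt_of_le_of_ne (by linarith) hne'
        refine Or.inr ⟨h0, by linarith, fun t ht1 ht2 => ?_, ?_⟩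
        · have h1 : P t = P (b - sbb + t) := by
            rw [show b - sbb + t = b + 1 - sbb + t - 1 by ring]
            exact hB t ht1 ht2
          have h2 : P (b - sbb + t) = P (j - 1 - b + (b - sbb + t)) :=
            hbB (b - sbb + t) (by linarith) (by linarith)
          rw [h1, h2, show j - 1 - b + (b - sbb + t) = j - sbb + t - 1 by ring]
        · rw [← heq]; exact hne
    have hge : sbb ≤ sbj := hsbjub hsbbmemj
    -- sbj ∈ SBSet P (b+1)
    have hle : sbj ≤ sbb := by
      rcases hsbjmem with h | ⟨h0, hlt, hB, hne⟩
      · have : (-1 : ℤ) ≤ sbb := hsbbub (Or.inl rfl)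
        linarith
      · have hne'' : sbj ≠ j - 1 := by
          intro h
          exact hne (by rw [h, show j - 1 + 1 = j by ring])
        have hlt' : sbj < j - 1 := lt_of_le_of_ne (by linarith) hne''
        have hmemB : sbj ∈ BordSet P (j - 1) := ⟨h0, hlt', fun t ht1 ht2 => by
          rw [show j - 1 - sbj + t = j - sbj + t - 1 by ring]; exact hB t ht1 ht2⟩
        have hleb : sbj ≤ b := hbub hmemB
        have hneb : sbj ≠ b := by
          intro h; exact hne (by rw [h, heq])
        have hltb : sbj < b := lt_of_le_of_ne hleb hneb
        have : sbj ∈ SBSet P (b + 1) := by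
          refine Or.inr ⟨h0, by linarith, fun t ht1 ht2 => ?_, ?_⟩
          · have h1 : P t = P (j - 1 - sbj + t) := by
              rw [show j - 1 - sbj + t = j - sbj + t - 1 by ring]
              exact hB t ht1 ht2
            have h2 : P (b - sbj + t) = P (j - 1 - b + (b - sbj + t)) :=
              hbB (b - sbj + t) (by linarith) (by linarith)
            rw [show b + 1 - sbj + t - 1 = b - sbj + t by ring, h2,
              show j - 1 - b + (b - sbj + t) = j - 1 - sbj + t by ring]
            exact h1
          · rw [heq]; exact hne
        exact hsbbub this
    linarith
end

section
/- Let 2 ≤ j ≤ m, q ≤ pos ≤ m, and 1 ≤ i ≤ n−m+1. Suppose P[1:j−1] = T[i:i+j−2], P[j] ≠ T[i+j−1], and h(P[pos−q+1 : pos]) = h(T[i−1+pos−q+1 : i−1+pos]). Then for every integer k with 0 < k < max(KMP_Shift[j], dist[pos]) and i+k+m−1 ≤ n, it holds that P ≠ T[i+k : i+k+m−1]; that is, in the Comparison-phase it is safe to shift the pattern by the larger of KMP_Shift[j] and dist[pos]. -/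
/-- In the Comparison-phase of the DISTq algorithm: if `P[1:j−1] = T[i:i+j−2]`,
`P[j] ≠ T[i+j−1]` and `h(P[pos−q+1:pos]) = h(T[i−1+pos−q+1 : i−1+pos])`, then for every
`0 < k < max(KMP_Shift[j], dist[pos])` with `i+k+m−1 ≤ n`, `P ≠ T[i+k : i+k+m−1]`;
so shifting by the larger of `KMP_Shift[j] = j − Strong_Bord_P(j) − 1` and `dist[pos]`
skips no occurrence of `P` in `T`. -/
theorem comparison_phase_shift_safe
    (n m : ℤ) (T P : ℤ → ℕ) (q : ℕ) (hq1 : 1 ≤ q) (hm : 1 ≤ m) (hmn : m ≤ n)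
    (j pos i : ℤ) (hj2 : 2 ≤ j) (hjm : j ≤ m)
    (hqpos : (q : ℤ) ≤ pos) (hposm : pos ≤ m)
    (hi1 : 1 ≤ i) (hin : i ≤ n - m + 1)
    (hpre : ∀ t : ℤ, 1 ≤ t → t ≤ j - 1 → P t = T (i + t - 1))
    (hmis : P j ≠ T (i + j - 1))
    (hhash : h4 P q (pos - q + 1) = h4 T q (i + pos - q))
    (sb : ℤ) (hsb : IsGreatest (SBSet P j) sb)
    (d : ℤ) (hd : IsLeast (DistSet P q pos) d) :
    ∀ k : ℤ, 0 < k → k < max (j - sb - 1) d → i + k + m - 1 ≤ n →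
      ¬ (∀ t : ℤ, 1 ≤ t → t ≤ m → P t = T (i + k + t - 1)) := by
  intro k hk0 hkmax hkn hOcc
  have hkmp : j - sb - 1 ≤ k := by
    by_cases hkj : k ≤ j - 1
    · have hmem : (j - k - 1) ∈ SBSet P j := by
        right
        refine ⟨by linarith, by linarith, ?_, ?_⟩
        · intro t ht1 htk
          have h1 : P t = T (i + k + t - 1) := hOcc t ht1 (by linarith)
          have h2 : P (k + t) = T (i + (k + t) - 1) :=
            hpre (k + t) (by linarith) (by linarith)
          have e1 : j - (j - k - 1) + t - 1 = k + t := by ring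
          have e2 : i + (k + t) - 1 = i + k + t - 1 := by ring
          rw [e1, h1, h2, e2]
        · have e1 : j - k - 1 + 1 = j - k := by ring
          rw [e1]
          have h1 : P (j - k) = T (i + k + (j - k) - 1) :=
            hOcc (j - k) (by linarith) (by linarith)
          have e2 : i + k + (j - k) - 1 = i + j - 1 := by ring
          rw [h1, e2]
          exact fun h => hmis h.symm
      have := hsb.2 hmem
      linarith
    · have := hsb.2 (Or.inl rfl : (-1 : ℤ) ∈ SBSet P j)
      linarith
  have hdist : d ≤ k := by
    by_cases hkpq : k ≤ pos - q
    · have hmem : k ∈ DistSet P q pos := by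
        right
        refine ⟨hk0, hkpq, ?_⟩
        rw [hhash]
        unfold h4
        congr 1
        apply Finset.sum_congr rfl
        intro t ht
        congr 1
        have htq : (t : ℤ) ≤ (q : ℤ) - 1 := by
          have := Finset.mem_range.mp ht
          have : (t : ℤ) < (q : ℤ) := by exact_mod_cast this
          linarith
        have h1 : P (pos - q + 1 - k + t) = T (i + k + (pos - q + 1 - k + t) - 1) :=
          hOcc (pos - q + 1 - k + t) (by push_cast; linarith) (by push_cast; linarith)
        rw [h1]
        congr 1
        ring
      exact hd.2 hmem
    · have := hd.2 (Or.inl rfl : (pos - q + 1) ∈ DistSet P q pos)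
      linarith
  exact absurd hkmax (not_lt.mpr (max_le hkmp hdist))
end
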